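/- Let f : ℕ → ℝ be a bounded completely multiplicative function and let P ∈ ℤ[x,y] be a homogeneous polynomial of degree k with P(ℕ²) ⊆ ℕ. If the limit L = lim_{N→∞} 𝔼_{1≤m,n≤N} f(P(m,n)) exists, then the limit lim_{N→∞} 𝔼_{1≤m,n≤N, gcd(m,n)=1} f(P(m,n)) exists and equals (π²/6) · ∏_p (1 − f(p)^k/p²) · L, where the product runs over all primes p. -/

import Mathlib

/-!
Since `P` is homogeneous, `P(da, db) = d ^ k P(a, b)`, so Möbius inversion over `d = gcd(m, n)`
writes the coprime sum as `∑_{d ≤ N} μ(d) f(d) ^ k G(⌊N / d⌋)` with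
`G(M) = ∑_{a, b ≤ M} f(P(a, b)) ~ L M²`. Dividing by `N²` and using dominated convergence gives
the limit `(∑_d μ(d) f(d) ^ k / d²) L`, and this series is the Euler product
`∏_p (1 - f(p) ^ k / p²)` because its terms are multiplicative and vanish at non-squarefree `d`.
The same computation with `G(M) = M²` counts the coprime pairs: there are `~ N² ∑_d μ(d) / d²`
`= (6 / π²) N²` of them.
-/

open Filter Finset Real

/-- The value `P(m,n)` of an integer polynomial in two variables at natural arguments,
as a natural number. -/
noncomputable def Pval (P : MvPolynomial (Fin 2) ℤ) (m n : ℕ) : ℕ :=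
  (MvPolynomial.eval ![(m : ℤ), (n : ℤ)] P).toNat

open Topology ArithmeticFunction
open scoped ArithmeticFunction.Moebius

theorem MvPolynomial.IsHomogeneous.eval_smul {σ R : Type*} [Fintype σ] [CommSemiring R]
    {φ : MvPolynomial σ R} {n : ℕ} (hφ : φ.IsHomogeneous n) (c : R) (x : σ → R) :
    eval (c • x) φ = c ^ n * eval x φ := by
  rw [eval_eq', eval_eq', mul_sum]
  refine sum_congr rfl fun d hd => ?_
  have hdeg : ∑ i, d i = n := by
    rw [← Finsupp.degree_eq_sum, Finsupp.degree_eq_weight_one (R := ℕ)]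
    exact hφ (mem_support_iff.mp hd)
  simp_rw [Pi.smul_apply, smul_eq_mul, mul_pow, prod_mul_distrib, prod_pow_eq_pow_sum, hdeg]
  ring

theorem Pval_mul_mul {P : MvPolynomial (Fin 2) ℤ} {k : ℕ} (hP : P.IsHomogeneous k)
    {a b : ℕ} (hab : 0 ≤ MvPolynomial.eval ![(a : ℤ), (b : ℤ)] P) (d : ℕ) :
    Pval P (d * a) (d * b) = d ^ k * Pval P a b := by
  have hsmul : ![((d * a : ℕ) : ℤ), ((d * b : ℕ) : ℤ)] = (d : ℤ) • ![(a : ℤ), (b : ℤ)] := by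
    ext i; fin_cases i <;> simp
  rw [Pval, Pval, hsmul, hP.eval_smul, Int.toNat_mul (by positivity) hab,
    Int.toNat_pow_of_nonneg (by positivity)]
  simp

theorem sum_divisors_moebius {R : Type*} [Ring R] (n : ℕ) :
    ∑ d ∈ n.divisors, (μ d : R) = if n = 1 then 1 else 0 := by
  have := congr($(coe_moebius_mul_coe_zeta (R := R)) n)
  rw [coe_mul_zeta_apply, one_apply] at this
  simpa using this

theorem filter_dvd_Icc_one_eq_map {d : ℕ} (hd : d ≠ 0) (N : ℕ) :
    (Icc 1 N).filter (d ∣ ·) = (Icc 1 (N / d)).map ⟨(d * ·), mul_right_injective₀ hd⟩ := by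
  ext m
  simp only [mem_filter, mem_Icc, Finset.mem_map, Function.Embedding.coeFn_mk]
  constructor
  · rintro ⟨⟨hm1, hmN⟩, a, rfl⟩
    refine ⟨a, ⟨Nat.pos_of_mul_pos_left hm1, ?_⟩, rfl⟩
    exact (Nat.le_div_iff_mul_le (Nat.pos_of_ne_zero hd)).2 (by rwa [mul_comm])
  · rintro ⟨a, ⟨ha1, haN⟩, rfl⟩
    refine ⟨⟨Nat.one_le_iff_ne_zero.2 (mul_ne_zero hd (by omega)), ?_⟩, dvd_mul_right d a⟩
    exact (Nat.mul_le_mul_left d haN).trans (Nat.mul_div_le N d)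

theorem sum_filter_coprime_eq_sum_moebius {R : Type*} [CommRing R] (h : ℕ → ℕ → R) (N : ℕ) :
    ∑ p ∈ (Icc 1 N ×ˢ Icc 1 N).filter (fun p => Nat.gcd p.1 p.2 = 1), h p.1 p.2 =
      ∑ d ∈ Icc 1 N, (μ d : R) *
        ∑ a ∈ Icc 1 (N / d), ∑ b ∈ Icc 1 (N / d), h (d * a) (d * b) := by
  have hcoprime : ∀ p ∈ Icc 1 N ×ˢ Icc 1 N, (if Nat.gcd p.1 p.2 = 1 then h p.1 p.2 else 0) =
      ∑ d ∈ (Nat.gcd p.1 p.2).divisors, (μ d : R) * h p.1 p.2 := by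
    intro p _
    rw [← sum_mul, sum_divisors_moebius, ite_mul, one_mul, zero_mul]
  rw [sum_filter, sum_congr rfl hcoprime,
    sum_comm' (t' := Icc 1 N) (s' := fun d => (Icc 1 N ×ˢ Icc 1 N).filter
      (fun p => d ∣ p.1 ∧ d ∣ p.2))]
  · refine sum_congr rfl fun d hd => ?_
    have hd0 : d ≠ 0 := by simp only [mem_Icc] at hd; omega
    rw [filter_product, filter_dvd_Icc_one_eq_map hd0, ← mul_sum, sum_product, sum_map]
    simp only [sum_map, Function.Embedding.coeFn_mk]
  · rintro ⟨m, n⟩ d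
    simp only [mem_product, mem_Icc, mem_filter, Nat.mem_divisors, Nat.dvd_gcd_iff]
    constructor
    · rintro ⟨⟨⟨hm1, hmN⟩, hn1, hnN⟩, ⟨hdm, hdn⟩, -⟩
      exact ⟨⟨⟨⟨hm1, hmN⟩, hn1, hnN⟩, hdm, hdn⟩, Nat.pos_of_dvd_of_pos hdm hm1,
        (Nat.le_of_dvd hm1 hdm).trans hmN⟩
    · rintro ⟨⟨⟨⟨hm1, hmN⟩, hn1, hnN⟩, hdm, hdn⟩, -⟩
      exact ⟨⟨⟨hm1, hmN⟩, hn1, hnN⟩, ⟨hdm, hdn⟩, (Nat.gcd_pos_of_pos_left n hm1).ne'⟩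

theorem tendsto_natCast_div_div_self {d : ℕ} (hd : d ≠ 0) :
    Tendsto (fun N : ℕ => ((N / d : ℕ) : ℝ) / N) atTop (𝓝 (1 / d)) := by
  have hd' : (0 : ℝ) < d := by positivity
  have h := (tendsto_nat_floor_div_atTop.comp
    (tendsto_natCast_atTop_atTop.atTop_div_const hd')).div_const (d : ℝ)
  refine h.congr' ?_
  filter_upwards [eventually_ne_atTop 0] with N hN
  simp only [Function.comp_apply, Nat.floor_div_eq_div]
  field_simp

theorem tendsto_comp_div_div_sq {G : ℕ → ℝ} {L : ℝ}
    (hG : Tendsto (fun M : ℕ => G M / (M : ℝ) ^ 2) atTop (𝓝 L)) {d : ℕ} (hd : d ≠ 0) :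
    Tendsto (fun N : ℕ => G (N / d) / (N : ℝ) ^ 2) atTop (𝓝 (L / (d : ℝ) ^ 2)) := by
  have h := (hG.comp (Nat.tendsto_div_const_atTop hd)).mul ((tendsto_natCast_div_div_self hd).pow 2)
  rw [div_pow, one_pow, ← div_eq_mul_one_div] at h
  refine h.congr' ?_
  filter_upwards [eventually_ge_atTop d] with N hN
  have hNd : ((N / d : ℕ) : ℝ) ≠ 0 := by
    exact_mod_cast (Nat.div_pos hN (Nat.pos_of_ne_zero hd)).ne'
  simp only [Function.comp_apply]
  field_simp

theorem abs_comp_div_div_sq_le {G : ℕ → ℝ} {D : ℝ}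
    (hG : ∀ M : ℕ, M ≠ 0 → |G M| ≤ D * (M : ℝ) ^ 2) {N d : ℕ} (hd : d ≠ 0) (hdN : d ≤ N) :
    |G (N / d) / (N : ℝ) ^ 2| ≤ D / (d : ℝ) ^ 2 := by
  have hN : (N : ℝ) ≠ 0 := by exact_mod_cast (by omega : N ≠ 0)
  have hD : 0 ≤ D := by simpa using (abs_nonneg _).trans (hG 1 one_ne_zero)
  have hcast : ((N / d : ℕ) : ℝ) ≤ N / d := Nat.cast_div_le
  rw [abs_div, abs_of_pos (by positivity : (0 : ℝ) < (N : ℝ) ^ 2)]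
  calc |G (N / d)| / (N : ℝ) ^ 2
      ≤ D * ((N / d : ℕ) : ℝ) ^ 2 / (N : ℝ) ^ 2 := by
        gcongr; exact hG _ (Nat.div_pos hdN (Nat.pos_of_ne_zero hd)).ne'
    _ ≤ D * ((N : ℝ) / d) ^ 2 / (N : ℝ) ^ 2 := by gcongr
    _ = D / (d : ℝ) ^ 2 := by field_simp

theorem tendsto_sum_Icc_mul_comp_div_div_sq {w G : ℕ → ℝ} {B L : ℝ} (hw : ∀ d, |w d| ≤ B)
    (hG : Tendsto (fun M : ℕ => G M / (M : ℝ) ^ 2) atTop (𝓝 L)) :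
    Tendsto (fun N : ℕ => (∑ d ∈ Icc 1 N, w d * G (N / d)) / (N : ℝ) ^ 2) atTop
      (𝓝 ((∑' d : ℕ, w d / (d : ℝ) ^ 2) * L)) := by
  obtain ⟨D, hD⟩ := hG.abs.bddAbove_range
  have hGD : ∀ M : ℕ, M ≠ 0 → |G M| ≤ D * (M : ℝ) ^ 2 := fun M hM => by
    have hM2 : (0 : ℝ) < (M : ℝ) ^ 2 := by positivity
    simpa [abs_div, div_le_iff₀ hM2] using hD (Set.mem_range_self M)
  -- `G 0` is unconstrained, so the terms with `N / d = 0` are cut off.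
  let F : ℕ → ℕ → ℝ := fun N d => if d ∈ Icc 1 N then w d * G (N / d) / (N : ℝ) ^ 2 else 0
  have hterm : ∀ d, Tendsto (F · d) atTop (𝓝 (w d / (d : ℝ) ^ 2 * L)) := by
    intro d
    rcases eq_or_ne d 0 with rfl | hd
    · simp [F]
    have h := (tendsto_comp_div_div_sq hG hd).const_mul (w d)
    rw [show w d / (d : ℝ) ^ 2 * L = w d * (L / (d : ℝ) ^ 2) by ring]
    refine h.congr' ?_
    filter_upwards [eventually_ge_atTop d] with N hN
    simp [F, hN, Nat.one_le_iff_ne_zero.mpr hd, mul_div_assoc]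
  have hB : 0 ≤ B := (abs_nonneg _).trans (hw 0)
  have hbound : ∀ N d, ‖F N d‖ ≤ B * (D / (d : ℝ) ^ 2) := by
    intro N d
    by_cases hdN : d ∈ Icc 1 N
    · obtain ⟨hd1, hdN'⟩ := mem_Icc.mp hdN
      simp only [F, if_pos hdN, Real.norm_eq_abs, mul_div_assoc, abs_mul]
      gcongr
      exacts [hw d, abs_comp_div_div_sq_le hGD (by omega) hdN']
    · simp only [F, if_neg hdN, norm_zero]
      have hD0 : 0 ≤ D := by simpa using hD (Set.mem_range_self 0)
      positivity
  have hsummable : Summable fun d : ℕ => B * (D / (d : ℝ) ^ 2) := by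
    simpa only [div_eq_mul_inv] using
      ((Real.summable_nat_pow_inv.mpr one_lt_two).mul_left D).mul_left B
  have hsum := tendsto_tsum_of_dominated_convergence hsummable hterm
    (Eventually.of_forall hbound)
  rw [tsum_mul_right] at hsum
  refine hsum.congr fun N => ?_
  rw [tsum_eq_sum (s := Icc 1 N) fun d hd => if_neg hd, sum_div]
  exact sum_congr rfl fun d hd => if_pos hd

theorem abs_moebius_real_le_one (n : ℕ) : |(μ n : ℝ)| ≤ 1 := by
  exact_mod_cast abs_moebius_le_one

theorem tsum_moebius_mul_div_sq_eq_tprod {g : ℕ → ℝ} {B : ℝ} (hg1 : g 1 = 1)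
    (hgmul : ∀ {m n : ℕ}, m.Coprime n → g (m * n) = g m * g n) (hgb : ∀ n, |g n| ≤ B) :
    ∑' d : ℕ, (μ d : ℝ) * g d / (d : ℝ) ^ 2 = ∏' p : Nat.Primes, (1 - g p / (p : ℝ) ^ 2) := by
  set t : ℕ → ℝ := fun d => (μ d : ℝ) * g d / (d : ℝ) ^ 2 with ht
  have hsum : Summable (‖t ·‖) := by
    refine .of_nonneg_of_le (fun _ => norm_nonneg _) (fun d => ?_)
      ((Real.summable_one_div_nat_pow.mpr one_lt_two).mul_left B)
    rw [ht, norm_div, norm_mul, Real.norm_eq_abs, Real.norm_eq_abs, norm_pow, Real.norm_natCast,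
      ← mul_one_div]
    gcongr
    exact (mul_le_mul (abs_moebius_real_le_one _) (hgb d) (abs_nonneg _)
      zero_le_one).trans_eq (one_mul B)
  have htmul : ∀ {m n : ℕ}, m.Coprime n → t (m * n) = t m * t n := fun {m n} hmn => by
    simp only [ht, isMultiplicative_moebius.map_mul_of_coprime hmn, hgmul hmn]
    push_cast
    ring
  rw [← EulerProduct.eulerProduct_tprod (by simp [ht, hg1]) htmul hsum (by simp [ht])]
  refine tprod_congr fun p => ?_
  have hp : (p : ℕ).Prime := p.2
  rw [tsum_eq_sum (s := range 2) fun e he => ?_]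
  · simp [ht, sum_range_succ, hg1, moebius_apply_prime hp, neg_div, sub_eq_add_neg]
  · have he2 : 1 < e := by simpa using he
    simp [ht, moebius_apply_prime_pow hp (by omega : e ≠ 0), show e ≠ 1 by omega]

theorem tsum_moebius_div_sq : ∑' d : ℕ, (μ d : ℝ) / (d : ℝ) ^ 2 = 6 / π ^ 2 := by
  have h2 : (1 : ℝ) < (2 : ℂ).re := by norm_num
  have hL : LSeries (fun n => (μ n : ℂ)) 2 = 6 / (π : ℂ) ^ 2 := by
    have h := LSeries_one_mul_Lseries_moebius h2
    rw [LSeries_one_eq_riemannZeta h2, riemannZeta_two] at h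
    have hpi : (π : ℂ) ^ 2 ≠ 0 := pow_ne_zero 2 (Complex.ofReal_ne_zero.mpr pi_ne_zero)
    field_simp at h ⊢
    linear_combination h
  have hterm : ∀ d : ℕ,
      (((μ d : ℝ) / (d : ℝ) ^ 2 : ℝ) : ℂ) = LSeries.term (fun n => (μ n : ℂ)) 2 d := by
    intro d
    rcases eq_or_ne d 0 with rfl | hd
    · simp
    · rw [LSeries.term_of_ne_zero hd, show (2 : ℂ) = ((2 : ℕ) : ℂ) by norm_num,
        Complex.cpow_natCast]
      push_cast
      ring
  apply Complex.ofReal_injective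
  rw [Complex.ofReal_tsum, tsum_congr hterm]
  push_cast
  exact hL

theorem sum_filter_coprime_Pval_eq {f : ℕ → ℝ} (hf1 : f 1 = 1)
    (hfmul : ∀ m n, f (m * n) = f m * f n) {k : ℕ} {P : MvPolynomial (Fin 2) ℤ}
    (hP : P.IsHomogeneous k)
    (hPnat : ∀ m n : ℕ, 1 ≤ m → 1 ≤ n → 0 ≤ MvPolynomial.eval ![(m : ℤ), (n : ℤ)] P) (N : ℕ) :
    ∑ p ∈ (Icc 1 N ×ˢ Icc 1 N).filter (fun p => Nat.gcd p.1 p.2 = 1), f (Pval P p.1 p.2) =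
      ∑ d ∈ Icc 1 N, (μ d : ℝ) * f d ^ k *
        ∑ a ∈ Icc 1 (N / d), ∑ b ∈ Icc 1 (N / d), f (Pval P a b) := by
  let fHom : ℕ →* ℝ := ⟨⟨f, hf1⟩, hfmul⟩
  rw [sum_filter_coprime_eq_sum_moebius (fun m n => f (Pval P m n))]
  refine sum_congr rfl fun d _ => ?_
  simp only [mul_assoc, mul_sum]
  refine sum_congr rfl fun a ha => sum_congr rfl fun b hb => ?_
  have hfpow : f (d ^ k) = f d ^ k := map_pow fHom d k
  rw [Pval_mul_mul hP (hPnat a b (mem_Icc.mp ha).1 (mem_Icc.mp hb).1), hfmul, hfpow]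

theorem tendsto_sum_filter_coprime_Pval_div_sq {f : ℕ → ℝ} {C : ℝ} (hfb : ∀ n, |f n| ≤ C)
    (hf1 : f 1 = 1) (hfmul : ∀ m n, f (m * n) = f m * f n) {k : ℕ}
    {P : MvPolynomial (Fin 2) ℤ} (hP : P.IsHomogeneous k)
    (hPnat : ∀ m n : ℕ, 1 ≤ m → 1 ≤ n → 0 ≤ MvPolynomial.eval ![(m : ℤ), (n : ℤ)] P) {L : ℝ}
    (hL : Tendsto (fun N : ℕ =>
        (∑ m ∈ Icc 1 N, ∑ n ∈ Icc 1 N, f (Pval P m n)) / (N : ℝ) ^ 2) atTop (𝓝 L)) :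
    Tendsto (fun N : ℕ =>
        (∑ p ∈ (Icc 1 N ×ˢ Icc 1 N).filter (fun p => Nat.gcd p.1 p.2 = 1),
          f (Pval P p.1 p.2)) / (N : ℝ) ^ 2) atTop
      (𝓝 ((∑' d : ℕ, (μ d : ℝ) * f d ^ k / (d : ℝ) ^ 2) * L)) := by
  have hw : ∀ d, |(μ d : ℝ) * f d ^ k| ≤ C ^ k := fun d => by
    rw [abs_mul, abs_pow]
    exact mul_le_of_le_one_left (by positivity) (abs_moebius_real_le_one _)
      |>.trans (pow_le_pow_left₀ (abs_nonneg _) (hfb d) k)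
  refine (tendsto_sum_Icc_mul_comp_div_div_sq hw hL).congr fun N => ?_
  rw [sum_filter_coprime_Pval_eq hf1 hfmul hP hPnat]

theorem tendsto_card_filter_coprime_div_sq :
    Tendsto (fun N : ℕ =>
        (((Icc 1 N ×ˢ Icc 1 N).filter (fun p => Nat.gcd p.1 p.2 = 1)).card : ℝ) / (N : ℝ) ^ 2)
      atTop (𝓝 (6 / π ^ 2)) := by
  have hsq : Tendsto (fun M : ℕ => (M : ℝ) ^ 2 / (M : ℝ) ^ 2) atTop (𝓝 1) :=
    tendsto_const_nhds.congr' <| by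
      filter_upwards [eventually_ne_atTop 0] with M hM
      exact (div_self (by positivity)).symm
  have h := tendsto_sum_Icc_mul_comp_div_div_sq (w := fun d => (μ d : ℝ))
    abs_moebius_real_le_one hsq
  rw [tsum_moebius_div_sq, mul_one] at h
  refine h.congr fun N => ?_
  have hcard := sum_filter_coprime_eq_sum_moebius (fun _ _ => (1 : ℝ)) N
  simp only [sum_const, nsmul_eq_mul, mul_one, Nat.card_Icc, Nat.add_sub_cancel] at hcard
  rw [hcard]
  simp only [sq]

theorem stmt3 (f : ℕ → ℝ) (C : ℝ) (hfb : ∀ n, |f n| ≤ C)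
    (hf1 : f 1 = 1) (hfmul : ∀ m n, f (m * n) = f m * f n)
    (k : ℕ) (P : MvPolynomial (Fin 2) ℤ) (hP : P.IsHomogeneous k)
    (hPnat : ∀ m n : ℕ, 1 ≤ m → 1 ≤ n → 0 ≤ MvPolynomial.eval ![(m : ℤ), (n : ℤ)] P)
    (L : ℝ)
    (hL : Tendsto (fun N : ℕ =>
        (∑ m ∈ Finset.Icc 1 N, ∑ n ∈ Finset.Icc 1 N, f (Pval P m n)) / (N : ℝ) ^ 2)
      atTop (nhds L)) :
    Tendsto (fun N : ℕ =>
        (∑ p ∈ (Finset.Icc 1 N ×ˢ Finset.Icc 1 N).filter (fun p => Nat.gcd p.1 p.2 = 1),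
            f (Pval P p.1 p.2)) /
          (((Finset.Icc 1 N ×ˢ Finset.Icc 1 N).filter
              (fun p => Nat.gcd p.1 p.2 = 1)).card : ℝ))
      atTop
      (nhds ((Real.pi ^ 2 / 6) *
        (∏' p : {p : ℕ // p.Prime}, (1 - f p.1 ^ k / (p.1 : ℝ) ^ 2)) * L)) := by
  have hratio := (tendsto_sum_filter_coprime_Pval_div_sq hfb hf1 hfmul hP hPnat hL).div
    tendsto_card_filter_coprime_div_sq (by positivity)
  have heuler := tsum_moebius_mul_div_sq_eq_tprod (g := (f · ^ k)) (by simp [hf1])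
    (fun {m n} _ => by simp only [hfmul, mul_pow]) (fun n => by
      rw [abs_pow]; exact pow_le_pow_left₀ (abs_nonneg _) (hfb n) k)
  have hlim : (∑' d : ℕ, (μ d : ℝ) * f d ^ k / (d : ℝ) ^ 2) * L / (6 / π ^ 2) =
      π ^ 2 / 6 * (∏' p : Nat.Primes, (1 - f p ^ k / (p : ℝ) ^ 2)) * L := by
    rw [heuler]
    field_simp
  rw [hlim] at hratio
  refine hratio.congr' ?_
  filter_upwards [eventually_ne_atTop 0] with N hN
  exact div_div_div_cancel_right₀ (by positivity) _ _
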